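/- arXiv:0711.3930 — 4 statements merged into one kernel-verified Lean document; each statement's English description precedes it below -/
import Mathlib

section
/- Let λ, μ, ν be partitions with at most r parts and let a, b ∈ {0,…,r} with c = a+b ≤ r. Define λ̃, μ̃, ν̃ by subtracting 1 from the first a parts of λ, the first b parts of μ, and the first c parts of ν, respectively (assuming these remain partitions). If additionally ν₁ + ν_{c+1} < λ_a + μ_b (with the conventions λ₀ = μ₀ = +∞-type boundary handled by the hypotheses of the TT-reduction), then the number of Littlewood–Richardson fillings of ν\λ according to μ equals the number of Littlewood–Richardson fillings of ν̃\λ̃ according to μ̃; i.e., c^ν_{λ,μ} = c^{ν̃}_{λ̃,μ̃}. -/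
namespace Paper

/-- The `f`-th smallest element of the finset `I` (1-indexed), with the convention
`elem I 0 = 0`. -/
def elem (I : Finset ℕ) (f : ℕ) : ℕ :=
  if f = 0 then 0 else (I.sort (· ≤ ·)).getD (f - 1) 0

/-- A Littlewood–Richardson filling of `ν\λ` according to `μ`, for partitions `λ, μ, ν`
with at most `r` parts (1-indexed): nonnegative integers `(f k ℓ)_{1 ≤ k ≤ ℓ ≤ r}`, where
`f k ℓ` is the number of `k`'s in row `ℓ`, subject to the row-sum, content, shape and
lattice-word conditions. -/
def IsFilling (r : ℕ) (lam mu nu : ℕ → ℕ) (f : ℕ → ℕ → ℕ) : Prop :=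
  (∀ k ℓ : ℕ, (k < 1 ∨ ℓ < k ∨ r < ℓ) → f k ℓ = 0) ∧
  (∀ ℓ, 1 ≤ ℓ → ℓ ≤ r → lam ℓ + ∑ k ∈ Finset.Icc 1 ℓ, f k ℓ = nu ℓ) ∧
  (∀ k, 1 ≤ k → k ≤ r → (∑ ℓ ∈ Finset.Icc k r, f k ℓ) = mu k) ∧
  (∀ p ℓ : ℕ, p < ℓ → ℓ < r →
    lam (ℓ + 1) + ∑ k ∈ Finset.Icc 1 (p + 1), f k (ℓ + 1) ≤
      lam ℓ + ∑ k ∈ Finset.Icc 1 p, f k ℓ) ∧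
  (∀ k p : ℕ, 1 ≤ k → k ≤ p → p < r →
    (∑ ℓ ∈ Finset.Icc (k + 1) (p + 1), f (k + 1) ℓ) ≤ ∑ ℓ ∈ Finset.Icc k p, f k ℓ)

/-- The Littlewood–Richardson coefficient `c^ν_{λ,μ}`: the number of Littlewood–Richardson
fillings of `ν\λ` according to `μ`. -/
noncomputable def LRcoeff (r : ℕ) (lam mu nu : ℕ → ℕ) : ℕ :=
  Nat.card {f : ℕ → ℕ → ℕ // IsFilling r lam mu nu f}

/-- `λ = ρ_r(σₙ(I))`: the `p`-th part is `n − r + p − i_p`. -/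
def lamOf (n r : ℕ) (I : Finset ℕ) (p : ℕ) : ℕ :=
  if 1 ≤ p ∧ p ≤ r then n + p - r - elem I p else 0

/-- `ν = ρ_r(K)`: the `p`-th part is `k_{r+1−p} − (r+1−p)`. -/
def nuOf (r : ℕ) (K : Finset ℕ) (p : ℕ) : ℕ :=
  if 1 ≤ p ∧ p ≤ r then elem K (r + 1 - p) - (r + 1 - p) else 0

/-- The Littlewood–Richardson coefficient `c⁽ⁿ⁾(I,J,K)` of a triple of `r`-element subsets of
`{1,…,n}`, namely `c^ν_{λ,μ}` with `λ = ρ_r(σₙ(I))`, `μ = ρ_r(σₙ(J))`, `ν = ρ_r(K)`. -/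
noncomputable def cIJK (n : ℕ) (I J K : Finset ℕ) : ℕ :=
  LRcoeff I.card (lamOf n I.card I) (lamOf n I.card J) (nuOf I.card K)

/-- The set `Ũⁿ_r` of triples of `r`-subsets of `{1,…,n}` whose total element sum is
`r(4n−r+3)/2`. -/
def Utilde (n r : ℕ) : Set (Finset ℕ × Finset ℕ × Finset ℕ) :=
  {t | t.1 ⊆ Finset.Icc 1 n ∧ t.2.1 ⊆ Finset.Icc 1 n ∧ t.2.2 ⊆ Finset.Icc 1 n ∧
       t.1.card = r ∧ t.2.1.card = r ∧ t.2.2.card = r ∧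
       2 * ((∑ i ∈ t.1, i) + (∑ j ∈ t.2.1, j) + (∑ k ∈ t.2.2, k)) = r * (4 * n - r + 3)}

/-- Fuel-based auxiliary recursion for the symmetrized Horn sets `T̃ⁿ_r`. -/
def TtildeAux : ℕ → ℕ → ℕ → Set (Finset ℕ × Finset ℕ × Finset ℕ)
  | 0, n, r => Utilde n r
  | fuel + 1, n, r =>
    {t ∈ Utilde n r | ∀ p : ℕ, 0 < p → p < r → ∀ s ∈ TtildeAux fuel r p,
      p * (4 * n - p + 3) ≤
        2 * ((∑ x ∈ s.1, elem t.1 x) + (∑ x ∈ s.2.1, elem t.2.1 x) +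
             (∑ x ∈ s.2.2, elem t.2.2 x))}

/-- The symmetrized Horn set `T̃ⁿ_r`. -/
def Ttilde (n r : ℕ) : Set (Finset ℕ × Finset ℕ × Finset ℕ) := TtildeAux r n r

/-- The triple `(I,J,K)` is TT-reducible: there are `u,v,w ∈ {0,…,r}` with `u+v+w = r`,
the gap conditions (`u = r` or `i_{u+1} − i_u ≥ 2`, etc.), and `i_u + j_v + k_w ≤ n − 1`
(with `i₀ = j₀ = k₀ = 0`). -/
def TTReducible (n r : ℕ) (t : Finset ℕ × Finset ℕ × Finset ℕ) : Prop :=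
  ∃ u v w : ℕ, u ≤ r ∧ v ≤ r ∧ w ≤ r ∧ u + v + w = r ∧
    (u = r ∨ elem t.1 u + 2 ≤ elem t.1 (u + 1)) ∧
    (v = r ∨ elem t.2.1 v + 2 ≤ elem t.2.1 (v + 1)) ∧
    (w = r ∨ elem t.2.2 w + 2 ≤ elem t.2.2 (w + 1)) ∧
    elem t.1 u + elem t.2.1 v + elem t.2.2 w ≤ n - 1

end Paper

namespace TTRed

open Finset

/-- The increment pattern of the TT-reduction bijection: one box with entry `k`
in row `a + k`, for each `1 ≤ k ≤ b`. -/
def eind (a b k ℓ : ℕ) : ℕ := if 1 ≤ k ∧ k ≤ b ∧ ℓ = a + k then 1 else 0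

/-- Partial row counts: `S lam f ℓ p` is the number of boxes in row `ℓ` with entry `≤ p`
(counting the `lam` part as well). -/
def S (lam : ℕ → ℕ) (f : ℕ → ℕ → ℕ) (ℓ p : ℕ) : ℕ :=
  lam ℓ + ∑ k ∈ Finset.Icc 1 p, f k ℓ

/-- Partial column counts: `T f k p` is the number of `k`'s in rows `k,…,p`. -/
def T (f : ℕ → ℕ → ℕ) (k p : ℕ) : ℕ := ∑ ℓ ∈ Finset.Icc k p, f k ℓ

lemma sum_Icc_split (g : ℕ → ℕ) (m mid q : ℕ) (h1 : m ≤ mid + 1) (h2 : mid ≤ q) :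
    (∑ ℓ ∈ Finset.Icc m q, g ℓ) =
      (∑ ℓ ∈ Finset.Icc m mid, g ℓ) + ∑ ℓ ∈ Finset.Icc (mid + 1) q, g ℓ := by
  have hu : Finset.Icc m mid ∪ Finset.Icc (mid + 1) q = Finset.Icc m q := by
    ext x
    simp only [Finset.mem_union, Finset.mem_Icc]
    omega
  have hd : Disjoint (Finset.Icc m mid) (Finset.Icc (mid + 1) q) := by
    rw [Finset.disjoint_left]
    intro x hx hy
    simp only [Finset.mem_Icc] at hx hy
    omega
  rw [← hu, Finset.sum_union hd]

lemma sum_eind_row (a b ℓ p : ℕ) :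
    (∑ k ∈ Finset.Icc 1 p, eind a b k ℓ) =
      if a < ℓ ∧ ℓ ≤ a + b ∧ ℓ ≤ a + p then 1 else 0 := by
  rcases le_or_gt ℓ a with h | h
  · have hz : ∀ k ∈ Finset.Icc 1 p, eind a b k ℓ = 0 := by
      intro k hk; unfold eind; rw [if_neg (by omega)]
    rw [Finset.sum_eq_zero hz, if_neg (by omega)]
  · have hcong : ∀ k ∈ Finset.Icc 1 p,
        eind a b k ℓ = if k = ℓ - a then (if ℓ - a ≤ b then 1 else 0) else 0 := by
      intro k hk
      unfold eind
      split_ifs <;> omega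
    rw [Finset.sum_congr rfl hcong, Finset.sum_ite_eq' (Finset.Icc 1 p) (ℓ - a)]
    simp only [Finset.mem_Icc]
    split_ifs <;> omega

lemma sum_eind_col (a b k m q : ℕ) :
    (∑ ℓ ∈ Finset.Icc m q, eind a b k ℓ) =
      if 1 ≤ k ∧ k ≤ b ∧ m ≤ a + k ∧ a + k ≤ q then 1 else 0 := by
  have hcong : ∀ ℓ ∈ Finset.Icc m q,
      eind a b k ℓ = if ℓ = a + k then (if 1 ≤ k ∧ k ≤ b then 1 else 0) else 0 := by
    intro ℓ hℓ
    unfold eind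
    split_ifs <;> omega
  rw [Finset.sum_congr rfl hcong, Finset.sum_ite_eq' (Finset.Icc m q) (a + k)]
  simp only [Finset.mem_Icc]
  split_ifs <;> omega

variable {r a b : ℕ} {lam mu nu : ℕ → ℕ} {f g : ℕ → ℕ → ℕ}

lemma S_mono (lam : ℕ → ℕ) (f : ℕ → ℕ → ℕ) (ℓ : ℕ) {p q : ℕ} (h : p ≤ q) :
    S lam f ℓ p ≤ S lam f ℓ q :=
  Nat.add_le_add_left
    (Finset.sum_le_sum_of_subset (Finset.Icc_subset_Icc_right h)) _

lemma S_succ (lam : ℕ → ℕ) (f : ℕ → ℕ → ℕ) (m k : ℕ) :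
    S lam f m (k + 1) = S lam f m k + f (k + 1) m := by
  unfold S
  rw [Finset.sum_Icc_succ_top (by omega : 1 ≤ k + 1)]
  omega

lemma S_shape (hf : Paper.IsFilling r lam mu nu f) {p ℓ : ℕ} (h1 : p < ℓ) (h2 : ℓ < r) :
    S lam f (ℓ + 1) (p + 1) ≤ S lam f ℓ p :=
  hf.2.2.2.1 p ℓ h1 h2

lemma S_eq_nu (hf : Paper.IsFilling r lam mu nu f) {ℓ p : ℕ}
    (h1 : 1 ≤ ℓ) (h2 : ℓ ≤ r) (h3 : ℓ ≤ p) : S lam f ℓ p = nu ℓ := by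
  unfold S
  rw [← hf.2.1 ℓ h1 h2]
  congr 1
  refine (Finset.sum_subset (Finset.Icc_subset_Icc_right h3) ?_).symm
  intro k hk hnk
  simp only [Finset.mem_Icc] at hk hnk
  exact hf.1 k ℓ (by omega)

lemma TS (hf : Paper.IsFilling r lam mu nu f) :
    ∀ d k m : ℕ, 1 ≤ k → k ≤ m → m + d ≤ r →
      (∑ ℓ ∈ Finset.Icc m (m + d), f k ℓ) + S lam f (m + d) (k - 1) ≤ S lam f m k := by
  intro d
  induction d with
  | zero =>
    intro k m hk1 hkm hmr
    obtain ⟨k', rfl⟩ : ∃ k', k = k' + 1 := ⟨k - 1, by omega⟩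
    have e2 : S lam f m (k' + 1) = S lam f m k' + f (k' + 1) m := S_succ lam f m k'
    simp only [Nat.add_zero, Nat.add_sub_cancel]
    rw [Finset.Icc_self, Finset.sum_singleton]
    omega
  | succ d ih =>
    intro k m hk1 hkm hmr
    have hsplit : (∑ ℓ ∈ Finset.Icc m (m + (d + 1)), f k ℓ) =
        f k m + ∑ ℓ ∈ Finset.Icc (m + 1) (m + (d + 1)), f k ℓ := by
      rw [sum_Icc_split (fun ℓ => f k ℓ) m m (m + (d + 1)) (by omega) (by omega),
        Finset.Icc_self, Finset.sum_singleton]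
    have ihh := ih k (m + 1) hk1 (by omega) (by omega)
    have e : m + 1 + d = m + (d + 1) := by omega
    rw [e] at ihh
    have hstep : S lam f (m + 1) k ≤ S lam f m (k - 1) := by
      obtain ⟨k', rfl⟩ : ∃ k', k = k' + 1 := ⟨k - 1, by omega⟩
      have := S_shape hf (p := k') (ℓ := m) (by omega) (by omega)
      simpa using this
    have e2 : S lam f m k = S lam f m (k - 1) + f k m := by
      obtain ⟨k', rfl⟩ : ∃ k', k = k' + 1 := ⟨k - 1, by omega⟩
      simpa using S_succ lam f m k'
    omega

lemma chainT (hf : Paper.IsFilling r lam mu nu f) :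
    ∀ d j m : ℕ, 1 ≤ j → j ≤ m → m + d ≤ r → T f (j + d) (m + d) ≤ T f j m := by
  intro d
  induction d with
  | zero => intro j m _ _ _; exact le_rfl
  | succ d ih =>
    intro j m h1 h2 h3
    have hlat := hf.2.2.2.2 (j + d) (m + d) (by omega) (by omega) (by omega)
    have e1 : j + (d + 1) = j + d + 1 := by omega
    have e2 : m + (d + 1) = m + d + 1 := by omega
    calc T f (j + (d + 1)) (m + (d + 1)) = T f (j + d + 1) (m + d + 1) := by rw [e1, e2]
      _ ≤ T f (j + d) (m + d) := hlat
      _ ≤ T f j m := ih j m h1 h2 (by omega)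

lemma T1 (hf : Paper.IsFilling r lam mu nu f) :
    ∀ m : ℕ, 1 ≤ m → m ≤ r → lam m + T f 1 m ≤ nu 1 := by
  intro m
  induction m with
  | zero => intro h1 _; exact absurd h1 (by omega)
  | succ m ih =>
    intro h1 h2
    rcases Nat.eq_zero_or_pos m with rfl | hm
    · have hrow := hf.2.1 1 le_rfl (by omega)
      rw [Finset.Icc_self, Finset.sum_singleton] at hrow
      show lam 1 + T f 1 1 ≤ nu 1
      have hT : T f 1 1 = f 1 1 := by
        unfold T; rw [Finset.Icc_self, Finset.sum_singleton]
      omega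
    · have hshape := hf.2.2.2.1 0 m (by omega) (by omega)
      have e1 : (∑ k ∈ Finset.Icc 1 (0 + 1), f k (m + 1)) = f 1 (m + 1) := by
        rw [Finset.Icc_self, Finset.sum_singleton]
      have e2 : (∑ k ∈ Finset.Icc 1 0, f k m) = 0 := by
        rw [Finset.Icc_eq_empty (by omega), Finset.sum_empty]
      rw [e1, e2] at hshape
      have e3 : T f 1 (m + 1) = T f 1 m + f 1 (m + 1) := by
        unfold T; rw [Finset.sum_Icc_succ_top (by omega)]
      have := ih hm (by omega)
      omega

lemma KeyA (hf : Paper.IsFilling r lam mu nu f) (hab : a + b ≤ r) {k : ℕ}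
    (hk1 : 1 ≤ k) (hkb : k ≤ b) :
    mu b ≤ T f 1 a + nu (a + b + 1) + f k (a + k) := by
  have hb1 : 1 ≤ b := hk1.trans hkb
  have hmub : (∑ ℓ ∈ Finset.Icc b r, f b ℓ) = mu b := hf.2.2.1 b hb1 (by omega)
  have hsplit : (∑ ℓ ∈ Finset.Icc b r, f b ℓ) =
      T f b (a + b) + ∑ ℓ ∈ Finset.Icc (a + b + 1) r, f b ℓ :=
    sum_Icc_split (f b) b (a + b) r (by omega) (by omega)
  have htail : (∑ ℓ ∈ Finset.Icc (a + b + 1) r, f b ℓ) ≤ nu (a + b + 1) := by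
    rcases le_or_gt (a + b + 1) r with h | h
    · obtain ⟨d, hd⟩ : ∃ d, r = a + b + 1 + d := ⟨r - (a + b + 1), by omega⟩
      have hTS := TS hf d b (a + b + 1) hb1 (by omega) (by omega)
      rw [← hd] at hTS
      have hmo := S_mono lam f (a + b + 1) (show b ≤ a + b + 1 by omega)
      have heq := S_eq_nu hf (ℓ := a + b + 1) (by omega) h le_rfl
      omega
    · rw [Finset.Icc_eq_empty (by omega), Finset.sum_empty]; omega
  have hchain : T f b (a + b) ≤ T f k (a + k) := by
    obtain ⟨d, hd⟩ : ∃ d, b = k + d := ⟨b - k, by omega⟩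
    have h := chainT hf d k (a + k) hk1 (by omega) (by omega)
    have h1 : k + d = b := hd.symm
    have h2 : a + k + d = a + b := by omega
    rw [h1, h2] at h
    exact h
  have hsplit2 : T f k (a + k) ≤ T f 1 a + f k (a + k) := by
    rcases Nat.eq_zero_or_pos a with rfl | ha
    · have h1 : T f k (0 + k) = f k (0 + k) := by
        unfold T
        rw [Nat.zero_add, Finset.Icc_self, Finset.sum_singleton]
      omega
    · have h1 : T f k (a + k) = T f k (a + k - 1) + f k (a + k) := by
        unfold T
        obtain ⟨m, hm⟩ : ∃ m, a + k = m + 1 := ⟨a + k - 1, by omega⟩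
        have hm' : a + k - 1 = m := by omega
        rw [hm', hm, Finset.sum_Icc_succ_top (by omega)]
      have h2 : T f k (a + k - 1) ≤ T f 1 a := by
        obtain ⟨d, hd⟩ : ∃ d, k = 1 + d := ⟨k - 1, by omega⟩
        have h := chainT hf d 1 a le_rfl ha (by omega)
        have e1 : 1 + d = k := hd.symm
        have e2 : a + d = a + k - 1 := by omega
        rw [e1, e2] at h
        exact h
      omega
  omega

lemma KeyB (hf : Paper.IsFilling r lam mu nu f) (hab : a + b ≤ r) {p : ℕ}
    (hb1 : 1 ≤ b) (hbp : b ≤ p) (hpc : p < a + b) (hcr : a + b < r) :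
    mu b + S lam f (a + b + 1) (p + 1) ≤ T f 1 a + nu (a + b + 1) + S lam f (a + b) p := by
  have ha1 : 1 ≤ a := by omega
  have hmub : (∑ ℓ ∈ Finset.Icc b r, f b ℓ) = mu b := hf.2.2.1 b hb1 (by omega)
  have hsplit : (∑ ℓ ∈ Finset.Icc b r, f b ℓ) =
      T f b (a + b - 1) + ∑ ℓ ∈ Finset.Icc (a + b) r, f b ℓ := by
    have h := sum_Icc_split (f b) b (a + b - 1) r (by omega) (by omega)
    have h' : a + b - 1 + 1 = a + b := by omega
    rw [h'] at h
    exact h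
  have htail : (∑ ℓ ∈ Finset.Icc (a + b) r, f b ℓ) ≤ S lam f (a + b) p := by
    obtain ⟨d, hd⟩ : ∃ d, r = a + b + d := ⟨r - (a + b), by omega⟩
    have hTS := TS hf d b (a + b) hb1 (by omega) (by omega)
    rw [← hd] at hTS
    have hmo := S_mono lam f (a + b) hbp
    omega
  have hchain : T f b (a + b - 1) ≤ T f 1 a := by
    obtain ⟨d, hd⟩ : ∃ d, b = 1 + d := ⟨b - 1, by omega⟩
    have h := chainT hf d 1 a le_rfl ha1 (by omega)
    have e1 : 1 + d = b := hd.symm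
    have e2 : a + d = a + b - 1 := by omega
    rw [e1, e2] at h
    exact h
  have hnuc : S lam f (a + b + 1) (p + 1) ≤ nu (a + b + 1) := by
    have h1 := S_mono lam f (a + b + 1) (show p + 1 ≤ a + b + 1 by omega)
    have h2 := S_eq_nu hf (ℓ := a + b + 1) (by omega) (by omega) le_rfl
    omega
  omega

lemma KeyC (hf : Paper.IsFilling r lam mu nu f) (hab : a + b ≤ r) {p : ℕ}
    (hb1 : 1 ≤ b) (hcp : a + b ≤ p) (hpr : p < r) :
    mu b + T f (b + 1) (p + 1) ≤ T f 1 a + nu (a + b + 1) + T f b p := by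
  have hmub : (∑ ℓ ∈ Finset.Icc b r, f b ℓ) = mu b := hf.2.2.1 b hb1 (by omega)
  have hsplit : (∑ ℓ ∈ Finset.Icc b r, f b ℓ) =
      T f b p + ∑ ℓ ∈ Finset.Icc (p + 1) r, f b ℓ :=
    sum_Icc_split (f b) b p r (by omega) (by omega)
  have h1 : (∑ ℓ ∈ Finset.Icc (p + 1) r, f b ℓ) + S lam f r (b - 1) ≤ S lam f (p + 1) b := by
    obtain ⟨d, hd⟩ : ∃ d, r = p + 1 + d := ⟨r - (p + 1), by omega⟩
    have hTS := TS hf d b (p + 1) hb1 (by omega) (by omega)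
    rw [← hd] at hTS
    exact hTS
  have h2 : (∑ ℓ ∈ Finset.Icc (a + b + 1) (p + 1), f (b + 1) ℓ) + S lam f (p + 1) b ≤
      S lam f (a + b + 1) (b + 1) := by
    obtain ⟨d, hd⟩ : ∃ d, p + 1 = a + b + 1 + d := ⟨p - (a + b), by omega⟩
    have hTS := TS hf d (b + 1) (a + b + 1) (by omega) (by omega) (by omega)
    rw [← hd] at hTS
    simpa using hTS
  have h3 : S lam f (a + b + 1) (b + 1) ≤ nu (a + b + 1) := by
    have hmo := S_mono lam f (a + b + 1) (show b + 1 ≤ a + b + 1 by omega)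
    have heq := S_eq_nu hf (ℓ := a + b + 1) (by omega) (by omega) le_rfl
    omega
  have h4 : T f (b + 1) (p + 1) =
      T f (b + 1) (a + b) + ∑ ℓ ∈ Finset.Icc (a + b + 1) (p + 1), f (b + 1) ℓ :=
    sum_Icc_split (f (b + 1)) (b + 1) (a + b) (p + 1) (by omega) (by omega)
  have h5 : T f (b + 1) (a + b) ≤ T f 1 a := by
    rcases Nat.eq_zero_or_pos a with rfl | ha
    · have hz1 : T f (b + 1) (0 + b) = 0 := by
        unfold T; rw [Finset.Icc_eq_empty (by omega), Finset.sum_empty]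
      have hz2 : T f 1 0 = 0 := by
        unfold T; rw [Finset.Icc_eq_empty (by omega), Finset.sum_empty]
      omega
    · have h := chainT hf b 1 a le_rfl ha (by omega)
      have e1 : 1 + b = b + 1 := by omega
      rw [e1] at h
      exact h
  omega

lemma eind_le (hab : a + b ≤ r)
    (hmain : 0 < a → 0 < b → nu 1 + nu (a + b + 1) < lam a + mu b)
    (hmain_a0 : a = 0 → 0 < b → nu (a + b + 1) < mu b)
    (hf : Paper.IsFilling r lam mu nu f) :
    ∀ k ℓ, eind a b k ℓ ≤ f k ℓ := by
  intro k ℓ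
  unfold eind
  split_ifs with h
  · obtain ⟨hk1, hkb, rfl⟩ := h
    have hKA := KeyA hf hab hk1 hkb
    rcases Nat.eq_zero_or_pos a with rfl | ha1
    · have h0 : T f 1 0 = 0 := by
        unfold T; rw [Finset.Icc_eq_empty (by omega), Finset.sum_empty]
      have hm := hmain_a0 rfl (by omega)
      omega
    · have hT1 := T1 hf a ha1 (by omega)
      have hm := hmain ha1 (by omega)
      omega
  · exact Nat.zero_le _

lemma forward (hab : a + b ≤ r)
    (hlampos : ∀ p, 1 ≤ p → p ≤ a → 1 ≤ lam p)
    (hmupos : ∀ p, 1 ≤ p → p ≤ b → 1 ≤ mu p)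
    (hmain : 0 < a → 0 < b → nu 1 + nu (a + b + 1) < lam a + mu b)
    (hmain_a0 : a = 0 → 0 < b → nu (a + b + 1) < mu b)
    (hmain_b0 : b = 0 → 0 < a → nu (a + b + 1) < lam a)
    (hf : Paper.IsFilling r lam mu nu f) :
    Paper.IsFilling r (fun p => lam p - if p ≤ a ∧ 1 ≤ p then 1 else 0)
      (fun p => mu p - if p ≤ b ∧ 1 ≤ p then 1 else 0)
      (fun p => nu p - if p ≤ a + b ∧ 1 ≤ p then 1 else 0)
      (fun k ℓ => f k ℓ - eind a b k ℓ) := by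
  have hef := eind_le hab hmain hmain_a0 hf
  have hfeq : ∀ (s : Finset ℕ) (ℓ : ℕ),
      (∑ k ∈ s, f k ℓ) = (∑ k ∈ s, (f k ℓ - eind a b k ℓ)) + ∑ k ∈ s, eind a b k ℓ := by
    intro s ℓ
    rw [← Finset.sum_add_distrib]
    exact Finset.sum_congr rfl fun k _ => (Nat.sub_add_cancel (hef k ℓ)).symm
  have hfeqc : ∀ (s : Finset ℕ) (k : ℕ),
      (∑ ℓ ∈ s, f k ℓ) = (∑ ℓ ∈ s, (f k ℓ - eind a b k ℓ)) + ∑ ℓ ∈ s, eind a b k ℓ := by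
    intro s k
    rw [← Finset.sum_add_distrib]
    exact Finset.sum_congr rfl fun ℓ _ => (Nat.sub_add_cancel (hef k ℓ)).symm
  refine ⟨?_, ?_, ?_, ?_, ?_⟩
  · intro k ℓ h
    dsimp only
    rw [hf.1 k ℓ h]
    exact Nat.zero_sub _
  · intro ℓ h1 h2
    dsimp only
    have hrow := hf.2.1 ℓ h1 h2
    have hs := hfeq (Finset.Icc 1 ℓ) ℓ
    rw [sum_eind_row] at hs
    have hd1 : (if ℓ ≤ a ∧ 1 ≤ ℓ then 1 else 0) ≤ lam ℓ := by
      split_ifs with h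
      · exact hlampos ℓ h.2 h.1
      · exact Nat.zero_le _
    have hrel : (if ℓ ≤ a ∧ 1 ≤ ℓ then 1 else 0)
        + (if a < ℓ ∧ ℓ ≤ a + b ∧ ℓ ≤ a + ℓ then 1 else 0)
        = (if ℓ ≤ a + b ∧ 1 ≤ ℓ then 1 else 0) := by
      split_ifs <;> omega
    omega
  · intro k h1 h2
    dsimp only
    have hcol := hf.2.2.1 k h1 h2
    have hs := hfeqc (Finset.Icc k r) k
    rw [sum_eind_col] at hs
    have hd : (if k ≤ b ∧ 1 ≤ k then 1 else 0) ≤ mu k := by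
      split_ifs with h
      · exact hmupos k h.2 h.1
      · exact Nat.zero_le _
    have hrel : (if 1 ≤ k ∧ k ≤ b ∧ k ≤ a + k ∧ a + k ≤ r then 1 else 0)
        = (if k ≤ b ∧ 1 ≤ k then 1 else 0) := by
      split_ifs <;> omega
    omega
  · intro p ℓ hpl hlr
    dsimp only
    have hs1 := hfeq (Finset.Icc 1 (p + 1)) (ℓ + 1)
    have hs2 := hfeq (Finset.Icc 1 p) ℓ
    rw [sum_eind_row] at hs1 hs2
    have hd1 : (if ℓ ≤ a ∧ 1 ≤ ℓ then 1 else 0) ≤ lam ℓ := by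
      split_ifs with h
      · exact hlampos ℓ h.2 h.1
      · exact Nat.zero_le _
    have hd1' : (if ℓ + 1 ≤ a ∧ 1 ≤ ℓ + 1 then 1 else 0) ≤ lam (ℓ + 1) := by
      split_ifs with h
      · exact hlampos (ℓ + 1) h.2 h.1
      · exact Nat.zero_le _
    by_cases hbad : ℓ = a + b ∧ b ≤ p
    · obtain ⟨rfl, hbp⟩ := hbad
      have hstrict : S lam f (a + b + 1) (p + 1) + 1 ≤ S lam f (a + b) p := by
        rcases Nat.eq_zero_or_pos b with rfl | hb1
        · have hx1 : S lam f (a + 0 + 1) (p + 1) ≤ nu (a + 0 + 1) := by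
            have hmo := S_mono lam f (a + 0 + 1) (show p + 1 ≤ a + 0 + 1 by omega)
            have heq := S_eq_nu hf (ℓ := a + 0 + 1) (by omega) (by omega) le_rfl
            omega
          have hx2 : lam (a + 0) ≤ S lam f (a + 0) p := by
            have h0 : S lam f (a + 0) 0 = lam (a + 0) := by
              unfold S
              rw [Finset.Icc_eq_empty (by omega), Finset.sum_empty]
              omega
            have hmo := S_mono lam f (a + 0) (Nat.zero_le p)
            omega
          have hla : lam (a + 0) = lam a := rfl
          have hm := hmain_b0 rfl (by omega)
          omega
        · have hKB := KeyB hf hab hb1 hbp (by omega) (by omega)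
          have ha1 : 1 ≤ a := by omega
          have hT1 := T1 hf a ha1 (by omega)
          have hm := hmain (by omega) (by omega)
          omega
      have eS1 : S lam f (a + b + 1) (p + 1)
          = lam (a + b + 1) + ∑ k ∈ Finset.Icc 1 (p + 1), f k (a + b + 1) := rfl
      have eS2 : S lam f (a + b) p
          = lam (a + b) + ∑ k ∈ Finset.Icc 1 p, f k (a + b) := rfl
      rw [eS1, eS2] at hstrict
      have hE1 : (if a < a + b + 1 ∧ a + b + 1 ≤ a + b ∧ a + b + 1 ≤ a + (p + 1)
          then 1 else 0) = 0 := by split_ifs <;> omega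
      have hE2 : (if a < a + b ∧ a + b ≤ a + b ∧ a + b ≤ a + p then 1 else 0)
          + (if a + b ≤ a ∧ 1 ≤ a + b then 1 else 0) = 1 := by
        split_ifs <;> omega
      have hd1v : (if a + b + 1 ≤ a ∧ 1 ≤ a + b + 1 then 1 else 0) = 0 := by
        split_ifs <;> omega
      omega
    · have hshape := hf.2.2.2.1 p ℓ hpl hlr
      have hmono : (if ℓ ≤ a ∧ 1 ≤ ℓ then 1 else 0)
          + (if a < ℓ ∧ ℓ ≤ a + b ∧ ℓ ≤ a + p then 1 else 0)
          ≤ (if ℓ + 1 ≤ a ∧ 1 ≤ ℓ + 1 then 1 else 0)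
          + (if a < ℓ + 1 ∧ ℓ + 1 ≤ a + b ∧ ℓ + 1 ≤ a + (p + 1) then 1 else 0) := by
        have hb' : ¬(ℓ = a + b ∧ b ≤ p) := hbad
        split_ifs <;> omega
      omega
  · intro k p hk1 hkp hpr
    dsimp only
    have hs1 := hfeqc (Finset.Icc (k + 1) (p + 1)) (k + 1)
    have hs2 := hfeqc (Finset.Icc k p) k
    rw [sum_eind_col] at hs1 hs2
    by_cases hbad : k = b ∧ a + b ≤ p
    · obtain ⟨hkb, hcp⟩ := hbad
      subst hkb
      have hKC := KeyC hf hab hk1 hcp hpr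
      have hstrict : T f (k + 1) (p + 1) + 1 ≤ T f k p := by
        rcases Nat.eq_zero_or_pos a with rfl | ha1
        · have h0 : T f 1 0 = 0 := by
            unfold T; rw [Finset.Icc_eq_empty (by omega), Finset.sum_empty]
          have hm := hmain_a0 rfl (by omega)
          omega
        · have hT1 := T1 hf a ha1 (by omega)
          have hm := hmain ha1 (by omega)
          omega
      have eT1 : T f (k + 1) (p + 1) = ∑ ℓ ∈ Finset.Icc (k + 1) (p + 1), f (k + 1) ℓ := rfl
      have eT2 : T f k p = ∑ ℓ ∈ Finset.Icc k p, f k ℓ := rfl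
      rw [eT1, eT2] at hstrict
      have hE1 : (if 1 ≤ k + 1 ∧ k + 1 ≤ k ∧ k + 1 ≤ a + (k + 1) ∧ a + (k + 1) ≤ p + 1
          then 1 else 0) = 0 := by split_ifs <;> omega
      have hE2 : (if 1 ≤ k ∧ k ≤ k ∧ k ≤ a + k ∧ a + k ≤ p then 1 else 0) = 1 := by
        split_ifs <;> omega
      omega
    · have hlat := hf.2.2.2.2 k p hk1 hkp hpr
      have hmono : (if 1 ≤ k ∧ k ≤ b ∧ k ≤ a + k ∧ a + k ≤ p then 1 else 0)
          ≤ (if 1 ≤ k + 1 ∧ k + 1 ≤ b ∧ k + 1 ≤ a + (k + 1) ∧ a + (k + 1) ≤ p + 1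
            then 1 else 0) := by
        have hb' : ¬(k = b ∧ a + b ≤ p) := hbad
        split_ifs <;> omega
      omega

lemma backward (hab : a + b ≤ r)
    (hlampos : ∀ p, 1 ≤ p → p ≤ a → 1 ≤ lam p)
    (hmupos : ∀ p, 1 ≤ p → p ≤ b → 1 ≤ mu p)
    (hnupos : ∀ p, 1 ≤ p → p ≤ a + b → 1 ≤ nu p)
    (hg : Paper.IsFilling r (fun p => lam p - if p ≤ a ∧ 1 ≤ p then 1 else 0)
      (fun p => mu p - if p ≤ b ∧ 1 ≤ p then 1 else 0)
      (fun p => nu p - if p ≤ a + b ∧ 1 ≤ p then 1 else 0) g) :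
    Paper.IsFilling r lam mu nu (fun k ℓ => g k ℓ + eind a b k ℓ) := by
  have hgeq : ∀ (s : Finset ℕ) (ℓ : ℕ),
      (∑ k ∈ s, (g k ℓ + eind a b k ℓ)) = (∑ k ∈ s, g k ℓ) + ∑ k ∈ s, eind a b k ℓ :=
    fun s ℓ => Finset.sum_add_distrib
  have hgeqc : ∀ (s : Finset ℕ) (k : ℕ),
      (∑ ℓ ∈ s, (g k ℓ + eind a b k ℓ)) = (∑ ℓ ∈ s, g k ℓ) + ∑ ℓ ∈ s, eind a b k ℓ :=
    fun s k => Finset.sum_add_distrib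
  refine ⟨?_, ?_, ?_, ?_, ?_⟩
  · intro k ℓ h
    dsimp only
    rw [hg.1 k ℓ h]
    have he : eind a b k ℓ = 0 := by
      unfold eind
      split_ifs with h'
      · exfalso; omega
      · rfl
    omega
  · intro ℓ h1 h2
    dsimp only
    have hrow := hg.2.1 ℓ h1 h2
    dsimp only at hrow
    rw [hgeq, sum_eind_row]
    have hd1 : (if ℓ ≤ a ∧ 1 ≤ ℓ then 1 else 0) ≤ lam ℓ := by
      split_ifs with h
      · exact hlampos ℓ h.2 h.1
      · exact Nat.zero_le _
    have hd3 : (if ℓ ≤ a + b ∧ 1 ≤ ℓ then 1 else 0) ≤ nu ℓ := by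
      split_ifs with h
      · exact hnupos ℓ h.2 h.1
      · exact Nat.zero_le _
    have hrel : (if ℓ ≤ a ∧ 1 ≤ ℓ then 1 else 0)
        + (if a < ℓ ∧ ℓ ≤ a + b ∧ ℓ ≤ a + ℓ then 1 else 0)
        = (if ℓ ≤ a + b ∧ 1 ≤ ℓ then 1 else 0) := by
      split_ifs <;> omega
    omega
  · intro k h1 h2
    dsimp only
    have hcol := hg.2.2.1 k h1 h2
    dsimp only at hcol
    rw [hgeqc, sum_eind_col]
    have hd : (if k ≤ b ∧ 1 ≤ k then 1 else 0) ≤ mu k := by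
      split_ifs with h
      · exact hmupos k h.2 h.1
      · exact Nat.zero_le _
    have hrel : (if 1 ≤ k ∧ k ≤ b ∧ k ≤ a + k ∧ a + k ≤ r then 1 else 0)
        = (if k ≤ b ∧ 1 ≤ k then 1 else 0) := by
      split_ifs <;> omega
    omega
  · intro p ℓ hpl hlr
    dsimp only
    have hshape := hg.2.2.2.1 p ℓ hpl hlr
    dsimp only at hshape
    rw [hgeq, hgeq, sum_eind_row, sum_eind_row]
    have hd1 : (if ℓ ≤ a ∧ 1 ≤ ℓ then 1 else 0) ≤ lam ℓ := by
      split_ifs with h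
      · exact hlampos ℓ h.2 h.1
      · exact Nat.zero_le _
    have hd1' : (if ℓ + 1 ≤ a ∧ 1 ≤ ℓ + 1 then 1 else 0) ≤ lam (ℓ + 1) := by
      split_ifs with h
      · exact hlampos (ℓ + 1) h.2 h.1
      · exact Nat.zero_le _
    have hmono : (if ℓ + 1 ≤ a ∧ 1 ≤ ℓ + 1 then 1 else 0)
        + (if a < ℓ + 1 ∧ ℓ + 1 ≤ a + b ∧ ℓ + 1 ≤ a + (p + 1) then 1 else 0)
        ≤ (if ℓ ≤ a ∧ 1 ≤ ℓ then 1 else 0)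
        + (if a < ℓ ∧ ℓ ≤ a + b ∧ ℓ ≤ a + p then 1 else 0) := by
      split_ifs <;> omega
    omega
  · intro k p hk1 hkp hpr
    dsimp only
    have hlat := hg.2.2.2.2 k p hk1 hkp hpr
    rw [hgeqc, hgeqc, sum_eind_col, sum_eind_col]
    have hmono : (if 1 ≤ k + 1 ∧ k + 1 ≤ b ∧ k + 1 ≤ a + (k + 1) ∧ a + (k + 1) ≤ p + 1
          then 1 else 0)
        ≤ (if 1 ≤ k ∧ k ≤ b ∧ k ≤ a + k ∧ a + k ≤ p then 1 else 0) := by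
      split_ifs <;> omega
    omega

end TTRed


/-- TT-reduction preserves Littlewood–Richardson coefficients.  Let `λ, μ, ν` be partitions
with at most `r` parts and `a, b ∈ {0,…,r}` with `c = a + b ≤ r`.  Define `λ̃, μ̃, ν̃` by
subtracting `1` from the first `a` parts of `λ`, the first `b` parts of `μ` and the first
`c` parts of `ν` (assuming these remain partitions).  If additionally
`ν₁ + ν_{c+1} < λ_a + μ_b` (with the boundary conventions for `a = 0` or `b = 0` coming
from the TT-reduction hypotheses), then `c^ν_{λ,μ} = c^{ν̃}_{λ̃,μ̃}`. -/
theorem LRcoeff_TT_reduction (r a b : ℕ) (lam mu nu : ℕ → ℕ)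
    (hab : a + b ≤ r)
    -- λ, μ, ν are partitions with at most r parts:
    (hlam : ∀ p, 1 ≤ p → p < r → lam (p + 1) ≤ lam p)
    (hmu : ∀ p, 1 ≤ p → p < r → mu (p + 1) ≤ mu p)
    (hnu : ∀ p, 1 ≤ p → p < r → nu (p + 1) ≤ nu p)
    (hlam0 : ∀ p, r < p → lam p = 0) (hmu0 : ∀ p, r < p → mu p = 0)
    (hnu0 : ∀ p, r < p → nu p = 0)
    -- the decremented parts are positive, so that subtraction is honest:
    (hlampos : ∀ p, 1 ≤ p → p ≤ a → 1 ≤ lam p)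
    (hmupos : ∀ p, 1 ≤ p → p ≤ b → 1 ≤ mu p)
    (hnupos : ∀ p, 1 ≤ p → p ≤ a + b → 1 ≤ nu p)
    -- λ̃, μ̃, ν̃ remain partitions:
    (hlamt : ∀ p, 1 ≤ p → p < r →
      (lam (p + 1) - if p + 1 ≤ a then 1 else 0) ≤ (lam p - if p ≤ a then 1 else 0))
    (hmut : ∀ p, 1 ≤ p → p < r →
      (mu (p + 1) - if p + 1 ≤ b then 1 else 0) ≤ (mu p - if p ≤ b then 1 else 0))
    (hnut : ∀ p, 1 ≤ p → p < r →
      (nu (p + 1) - if p + 1 ≤ a + b then 1 else 0) ≤ (nu p - if p ≤ a + b then 1 else 0))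
    -- the TT-reduction inequality ν₁ + ν_{c+1} < λ_a + μ_b, with the boundary conventions:
    (hmain : 0 < a → 0 < b → nu 1 + nu (a + b + 1) < lam a + mu b)
    (hmain_a0 : a = 0 → 0 < b → nu (a + b + 1) < mu b)
    (hmain_b0 : b = 0 → 0 < a → nu (a + b + 1) < lam a) :
    Paper.LRcoeff r lam mu nu =
      Paper.LRcoeff r (fun p => lam p - if p ≤ a ∧ 1 ≤ p then 1 else 0)
        (fun p => mu p - if p ≤ b ∧ 1 ≤ p then 1 else 0)
        (fun p => nu p - if p ≤ a + b ∧ 1 ≤ p then 1 else 0) := by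
  unfold Paper.LRcoeff
  apply Nat.card_congr
  exact
    { toFun := fun x =>
        ⟨fun k ℓ => x.1 k ℓ - TTRed.eind a b k ℓ,
          TTRed.forward hab hlampos hmupos hmain hmain_a0 hmain_b0 x.2⟩,
      invFun := fun y =>
        ⟨fun k ℓ => y.1 k ℓ + TTRed.eind a b k ℓ,
          TTRed.backward hab hlampos hmupos hnupos y.2⟩,
      left_inv := by
        intro x
        apply Subtype.ext
        funext k ℓ
        exact Nat.sub_add_cancel (TTRed.eind_le hab hmain hmain_a0 x.2 k ℓ),
      right_inv := by
        intro y
        apply Subtype.ext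
        funext k ℓ
        show y.1 k ℓ + TTRed.eind a b k ℓ - TTRed.eind a b k ℓ = y.1 k ℓ
        omega }
end

section
/- Let n ≥ r ≥ 2 and let (I,J,K) ∈ T̃ⁿ_r be TT-irreducible. Then i_r = j_r = k_r = n, i.e., each of I, J, K contains n. -/
section Aux
open Paper

private lemma elem_mem_aux (I : Finset ℕ) (p : ℕ) (h1 : 1 ≤ p) (h2 : p ≤ I.card) :
    Paper.elem I p ∈ I := by
  unfold Paper.elem
  rw [if_neg (by omega)]
  have hlen : (I.sort (· ≤ ·)).length = I.card := Finset.length_sort _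
  have hlt : p - 1 < (I.sort (· ≤ ·)).length := by omega
  rw [List.getD_eq_getElem _ _ hlt]
  have := List.getElem_mem hlt
  rwa [← Finset.mem_sort (· ≤ ·)]

private lemma elem_bounds (n : ℕ) (I : Finset ℕ) (hI : I ⊆ Finset.Icc 1 n) (p : ℕ)
    (h1 : 1 ≤ p) (h2 : p ≤ I.card) : 1 ≤ Paper.elem I p ∧ Paper.elem I p ≤ n := by
  have := hI (elem_mem_aux I p h1 h2)
  rwa [Finset.mem_Icc] at this

private lemma elem_singleton_one (a : ℕ) : Paper.elem {a} 1 = a := by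
  simp [Paper.elem, Finset.sort_singleton]

private lemma elem_zero (I : Finset ℕ) : Paper.elem I 0 = 0 := by
  simp [Paper.elem]

private lemma singleton_mem_Utilde (R a b c : ℕ) (ha : 1 ≤ a) (ha' : a ≤ R)
    (hb : 1 ≤ b) (hb' : b ≤ R) (hc : 1 ≤ c) (hc' : c ≤ R) (habc : a + b + c = 2 * R + 1) :
    (({a}, {b}, {c}) : Finset ℕ × Finset ℕ × Finset ℕ) ∈ Paper.Utilde R 1 := by
  refine ⟨?_, ?_, ?_, Finset.card_singleton _, Finset.card_singleton _,
    Finset.card_singleton _, ?_⟩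
  · simpa [Finset.singleton_subset_iff, Finset.mem_Icc] using ⟨ha, ha'⟩
  · simpa [Finset.singleton_subset_iff, Finset.mem_Icc] using ⟨hb, hb'⟩
  · simpa [Finset.singleton_subset_iff, Finset.mem_Icc] using ⟨hc, hc'⟩
  · simp only [Finset.sum_singleton]
    omega

private lemma mem_ttildeAux_one (fuel R : ℕ) (s : Finset ℕ × Finset ℕ × Finset ℕ)
    (hs : s ∈ Paper.Utilde R 1) : s ∈ Paper.TtildeAux fuel R 1 := by
  cases fuel with
  | zero => exact hs
  | succ f => exact ⟨hs, fun p hp hp1 => by omega⟩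

end Aux

/-- Let `n ≥ r ≥ 2` and let `(I,J,K) ∈ T̃ⁿ_r` be TT-irreducible.  Then
`i_r = j_r = k_r = n`, i.e. each of `I`, `J`, `K` contains `n` as largest element. -/
theorem irreducible_top_element (n r : ℕ) (hr2 : 2 ≤ r) (hrn : r ≤ n)
    (t : Finset ℕ × Finset ℕ × Finset ℕ) (ht : t ∈ Paper.Ttilde n r)
    (hirr : ¬ Paper.TTReducible n r t) :
    Paper.elem t.1 r = n ∧ Paper.elem t.2.1 r = n ∧ Paper.elem t.2.2 r = n := by
  obtain ⟨m, rfl⟩ : ∃ m, r = m + 2 := ⟨r - 2, by omega⟩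
  rw [Paper.Ttilde] at ht
  obtain ⟨hU, hH⟩ : t ∈ Paper.Utilde n (m + 2) ∧ _ := ht
  obtain ⟨hI, hJ, hK, hIc, hJc, hKc, hsum⟩ := hU
  -- Horn inequalities from p = 1 singleton triples
  have horn : ∀ a b c : ℕ, 1 ≤ a → a ≤ m + 2 → 1 ≤ b → b ≤ m + 2 → 1 ≤ c → c ≤ m + 2 →
      a + b + c = 2 * (m + 2) + 1 →
      4 * n + 2 ≤ 2 * (Paper.elem t.1 a + Paper.elem t.2.1 b + Paper.elem t.2.2 c) := by
    intro a b c ha ha' hb hb' hc hc' habc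
    have := hH 1 (by omega) (by omega) ({a}, {b}, {c})
      (mem_ttildeAux_one (m + 1) (m + 2) _
        (singleton_mem_Utilde (m + 2) a b c ha ha' hb hb' hc hc' habc))
    simp only [Finset.sum_singleton] at this
    have hn : 1 * (4 * n - 1 + 3) = 4 * n + 2 := by omega
    omega
  have H1 := horn (m + 2) 1 (m + 2) (by omega) le_rfl le_rfl (by omega) (by omega) le_rfl
    (by omega)
  have H2 := horn (m + 2) (m + 2) 1 (by omega) le_rfl (by omega) le_rfl le_rfl (by omega)
    (by omega)
  have H3 := horn 1 (m + 2) (m + 2) le_rfl (by omega) (by omega) le_rfl (by omega) le_rfl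
    (by omega)
  -- element bounds
  have bI1 := elem_bounds n t.1 hI 1 le_rfl (by omega)
  have bIr := elem_bounds n t.1 hI (m + 2) (by omega) (by omega)
  have bJ1 := elem_bounds n t.2.1 hJ 1 le_rfl (by omega)
  have bJr := elem_bounds n t.2.1 hJ (m + 2) (by omega) (by omega)
  have bK1 := elem_bounds n t.2.2 hK 1 le_rfl (by omega)
  have bKr := elem_bounds n t.2.2 hK (m + 2) (by omega) (by omega)
  -- consequences of irreducibility
  have R1 : ¬(2 ≤ Paper.elem t.2.1 1 ∧ 2 ≤ Paper.elem t.2.2 1 ∧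
      Paper.elem t.1 (m + 2) + 1 ≤ n) := by
    rintro ⟨h1, h2, h3⟩
    exact hirr ⟨m + 2, 0, 0, le_rfl, by omega, by omega, by omega, Or.inl rfl,
      Or.inr (by simpa [elem_zero] using h1), Or.inr (by simpa [elem_zero] using h2),
      by rw [elem_zero, elem_zero]; omega⟩
  have R2 : ¬(2 ≤ Paper.elem t.1 1 ∧ 2 ≤ Paper.elem t.2.2 1 ∧
      Paper.elem t.2.1 (m + 2) + 1 ≤ n) := by
    rintro ⟨h1, h2, h3⟩
    exact hirr ⟨0, m + 2, 0, by omega, le_rfl, by omega, by omega,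
      Or.inr (by simpa [elem_zero] using h1), Or.inl rfl,
      Or.inr (by simpa [elem_zero] using h2),
      by rw [elem_zero, elem_zero]; omega⟩
  have R3 : ¬(2 ≤ Paper.elem t.1 1 ∧ 2 ≤ Paper.elem t.2.1 1 ∧
      Paper.elem t.2.2 (m + 2) + 1 ≤ n) := by
    rintro ⟨h1, h2, h3⟩
    exact hirr ⟨0, 0, m + 2, by omega, by omega, le_rfl, by omega,
      Or.inr (by simpa [elem_zero] using h1), Or.inr (by simpa [elem_zero] using h2),
      Or.inl rfl, by rw [elem_zero, elem_zero]; omega⟩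
  obtain ⟨bi1, bi1'⟩ := bI1; obtain ⟨bir, bir'⟩ := bIr
  obtain ⟨bj1, bj1'⟩ := bJ1; obtain ⟨bjr, bjr'⟩ := bJr
  obtain ⟨bk1, bk1'⟩ := bK1; obtain ⟨bkr, bkr'⟩ := bKr
  refine ⟨?_, ?_, ?_⟩ <;> omega
end

section
/- For r = 3, a triple (I,J,K) ∈ T̃ⁿ₃ is TT-irreducible if and only if I = J = K = {m, m+ℓ, n} for some integers ℓ, m with 1 ≤ ℓ ≤ m and 2m + ℓ = n. -/
open Finset

namespace Finset

variable {α : Type*} [LinearOrder α]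

theorem sort_pair {a b : α} (hab : a < b) : ({a, b} : Finset α).sort (· ≤ ·) = [a, b] := by
  rw [sort_insert, sort_singleton] <;> grind

theorem sort_triple {a b c : α} (hab : a < b) (hbc : b < c) :
    ({a, b, c} : Finset α).sort (· ≤ ·) = [a, b, c] := by
  rw [sort_insert, sort_pair hbc] <;> grind

theorem exists_lt_lt_eq_of_card_eq_three {s : Finset α} (h : s.card = 3) :
    ∃ a b c, a < b ∧ b < c ∧ s = {a, b, c} := by
  set f := s.orderEmbOfFin h
  refine ⟨f 0, f 1, f 2, f.strictMono (by decide), f.strictMono (by decide), ?_⟩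
  conv_lhs => rw [← s.image_orderEmbOfFin_univ h]
  ext x
  simp only [mem_image, mem_univ, true_and, Fin.exists_fin_succ, Fin.exists_fin_zero, mem_insert,
    mem_singleton]
  grind

end Finset

namespace Paper

@[simp]
theorem elem_zero (I : Finset ℕ) : elem I 0 = 0 := rfl

theorem elem_pair {a b : ℕ} (hab : a < b) : elem {a, b} 1 = a ∧ elem {a, b} 2 = b := by
  simp [elem, sort_pair hab]

theorem elem_triple {a b c : ℕ} (hab : a < b) (hbc : b < c) :
    elem {a, b, c} 1 = a ∧ elem {a, b, c} 2 = b ∧ elem {a, b, c} 3 = c := by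
  simp [elem, sort_triple hab hbc]

theorem eq_triple_elem {I : Finset ℕ} (h : I.card = 3) :
    elem I 1 < elem I 2 ∧ elem I 2 < elem I 3 ∧ I = {elem I 1, elem I 2, elem I 3} := by
  obtain ⟨a, b, c, hab, hbc, rfl⟩ := exists_lt_lt_eq_of_card_eq_three h
  obtain ⟨h1, h2, h3⟩ := elem_triple hab hbc
  rw [h1, h2, h3]
  exact ⟨hab, hbc, rfl⟩

theorem eq_triple_of_elem_eq {I : Finset ℕ} (hI : I.card = 3) {a b c : ℕ} (ha : elem I 1 = a)
    (hb : elem I 2 = b) (hc : elem I 3 = c) : I = {a, b, c} :=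
  ha ▸ hb ▸ hc ▸ (eq_triple_elem hI).2.2

theorem elem_bounds {n : ℕ} {I : Finset ℕ} (hI : I ⊆ Icc 1 n) (hc : I.card = 3) :
    1 ≤ elem I 1 ∧ elem I 1 < elem I 2 ∧ elem I 2 < elem I 3 ∧ elem I 3 ≤ n := by
  obtain ⟨h12, h23, hI3⟩ := eq_triple_elem hc
  rw [hI3] at hI
  simp only [insert_subset_iff, singleton_subset_iff, mem_Icc] at hI
  omega

theorem sum_eq_elem {I : Finset ℕ} (hc : I.card = 3) :
    ∑ i ∈ I, i = elem I 1 + elem I 2 + elem I 3 := by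
  obtain ⟨h12, h23, hI3⟩ := eq_triple_elem hc
  conv_lhs => rw [hI3]
  rw [sum_insert (by simp; omega), sum_pair h23.ne, add_assoc]

theorem mem_TtildeAux_one {fuel n : ℕ} {t : Finset ℕ × Finset ℕ × Finset ℕ} :
    t ∈ TtildeAux fuel n 1 ↔ t ∈ Utilde n 1 := by
  cases fuel with
  | zero => rfl
  | succ fuel => exact ⟨fun h => h.1, fun h => ⟨h, fun p hp hp1 => absurd hp1 (by omega)⟩⟩

theorem mem_Utilde_one {n : ℕ} {t : Finset ℕ × Finset ℕ × Finset ℕ} :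
    t ∈ Utilde n 1 ↔ ∃ a b c, t = ({a}, {b}, {c}) ∧ a ∈ Icc 1 n ∧ b ∈ Icc 1 n ∧ c ∈ Icc 1 n ∧
      2 * (a + b + c) = 4 * n + 2 := by
  constructor
  · obtain ⟨I, J, K⟩ := t
    rintro ⟨hI, hJ, hK, hIc, hJc, hKc, hsum⟩
    obtain ⟨a, rfl⟩ := card_eq_one.1 hIc
    obtain ⟨b, rfl⟩ := card_eq_one.1 hJc
    obtain ⟨c, rfl⟩ := card_eq_one.1 hKc
    simp only [singleton_subset_iff, sum_singleton] at hI hJ hK hsum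
    refine ⟨a, b, c, rfl, hI, hJ, hK, ?_⟩
    have := mem_Icc.1 hI
    omega
  · rintro ⟨a, b, c, rfl, ha, hb, hc, habc⟩
    simp only [mem_Icc] at ha hb hc
    simp [Utilde]
    omega

theorem singletons_mem_TtildeAux {a b c : ℕ} (ha : a ≤ 3) (hb : b ≤ 3) (hc : c ≤ 3)
    (habc : a + b + c = 7) :
    (({a}, {b}, {c}) : Finset ℕ × Finset ℕ × Finset ℕ) ∈ TtildeAux 2 3 1 :=
  mem_TtildeAux_one.2 <| mem_Utilde_one.2
    ⟨a, b, c, rfl, mem_Icc.2 ⟨by omega, ha⟩, mem_Icc.2 ⟨by omega, hb⟩, mem_Icc.2 ⟨by omega, hc⟩,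
      by omega⟩

theorem pairs_mem_TtildeAux {a b c : ℕ} (ha : 0 < a) (hb : 0 < b) (hc : 0 < c)
    (habc : a + b + c = 4) :
    (({a, 3}, {b, 3}, {c, 3}) : Finset ℕ × Finset ℕ × Finset ℕ) ∈ TtildeAux 2 3 2 := by
  refine ⟨?_, fun p hp hp2 s hs => ?_⟩
  · have ha3 : a ≠ 3 := by omega
    have hb3 : b ≠ 3 := by omega
    have hc3 : c ≠ 3 := by omega
    refine ⟨?_, ?_, ?_, card_pair ha3, card_pair hb3, card_pair hc3, ?_⟩
    all_goals simp only [insert_subset_iff, singleton_subset_iff, mem_Icc, sum_pair ha3,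
      sum_pair hb3, sum_pair hc3]
    all_goals omega
  · obtain rfl : p = 1 := by omega
    obtain ⟨x, y, z, rfl, hx, hy, hz, hxyz⟩ := mem_Utilde_one.1 (mem_TtildeAux_one.1 hs)
    simp only [mem_Icc] at hx hy hz
    obtain ⟨ha1, ha2⟩ := elem_pair (show a < 3 by omega)
    obtain ⟨hb1, hb2⟩ := elem_pair (show b < 3 by omega)
    obtain ⟨hc1, hc2⟩ := elem_pair (show c < 3 by omega)
    obtain ⟨rfl, rfl, rfl⟩ | ⟨rfl, rfl, rfl⟩ | ⟨rfl, rfl, rfl⟩ :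
        (x = 1 ∧ y = 2 ∧ z = 2) ∨ (x = 2 ∧ y = 1 ∧ z = 2) ∨ (x = 2 ∧ y = 2 ∧ z = 1) := by omega
    all_goals simp only [sum_singleton]; omega

section Horn

variable {n : ℕ} {t : Finset ℕ × Finset ℕ × Finset ℕ}

theorem elem_bounds_of_mem_Utilde (ht : t ∈ Utilde n 3) :
    (1 ≤ elem t.1 1 ∧ elem t.1 1 < elem t.1 2 ∧ elem t.1 2 < elem t.1 3 ∧ elem t.1 3 ≤ n) ∧
    (1 ≤ elem t.2.1 1 ∧ elem t.2.1 1 < elem t.2.1 2 ∧ elem t.2.1 2 < elem t.2.1 3 ∧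
      elem t.2.1 3 ≤ n) ∧
    (1 ≤ elem t.2.2 1 ∧ elem t.2.2 1 < elem t.2.2 2 ∧ elem t.2.2 2 < elem t.2.2 3 ∧
      elem t.2.2 3 ≤ n) :=
  ⟨elem_bounds ht.1 ht.2.2.2.1, elem_bounds ht.2.1 ht.2.2.2.2.1, elem_bounds ht.2.2.1 ht.2.2.2.2.2.1⟩

theorem sum_elem_of_mem_Utilde (ht : t ∈ Utilde n 3) :
    elem t.1 1 + elem t.1 2 + elem t.1 3 + (elem t.2.1 1 + elem t.2.1 2 + elem t.2.1 3) +
      (elem t.2.2 1 + elem t.2.2 2 + elem t.2.2 3) = 6 * n := by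
  have hsum := ht.2.2.2.2.2.2
  rw [sum_eq_elem ht.2.2.2.1, sum_eq_elem ht.2.2.2.2.1, sum_eq_elem ht.2.2.2.2.2.1] at hsum
  have := (elem_bounds_of_mem_Utilde ht).1
  omega

theorem two_mul_add_one_le_of_mem_Ttilde_three (ht : t ∈ Ttilde n 3) {a b c : ℕ} (ha : a ≤ 3)
    (hb : b ≤ 3) (hc : c ≤ 3) (habc : a + b + c = 7) :
    2 * n + 1 ≤ elem t.1 a + elem t.2.1 b + elem t.2.2 c := by
  have := ht.2 1 one_pos (by norm_num) _ (singletons_mem_TtildeAux ha hb hc habc)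
  simp only [sum_singleton] at this
  omega

theorem four_mul_add_one_le_of_mem_Ttilde_three (ht : t ∈ Ttilde n 3) {a b c : ℕ} (ha : 0 < a)
    (hb : 0 < b) (hc : 0 < c) (habc : a + b + c = 4) :
    4 * n + 1 ≤ elem t.1 a + elem t.1 3 + (elem t.2.1 b + elem t.2.1 3) +
      (elem t.2.2 c + elem t.2.2 3) := by
  have := ht.2 2 two_pos (by norm_num) _ (pairs_mem_TtildeAux ha hb hc habc)
  rw [sum_pair (by omega), sum_pair (by omega), sum_pair (by omega)] at this
  omega

end Horn

theorem le_add_of_not_TTReducible {n r : ℕ} {t : Finset ℕ × Finset ℕ × Finset ℕ}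
    (h : ¬TTReducible n r t) {u v w : ℕ} (huvw : u + v + w = r)
    (hu : u = r ∨ elem t.1 u + 2 ≤ elem t.1 (u + 1))
    (hv : v = r ∨ elem t.2.1 v + 2 ≤ elem t.2.1 (v + 1))
    (hw : w = r ∨ elem t.2.2 w + 2 ≤ elem t.2.2 (w + 1)) :
    n ≤ elem t.1 u + elem t.2.1 v + elem t.2.2 w := by
  by_contra hlt
  exact h ⟨u, v, w, by omega, by omega, by omega, huvw, hu, hv, hw, by omega⟩

section Irreducible

variable {n : ℕ} {t : Finset ℕ × Finset ℕ × Finset ℕ}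

theorem elem_three_eq_of_not_TTReducible (ht : t ∈ Ttilde n 3) (hirr : ¬TTReducible n 3 t) :
    elem t.1 3 = n ∧ elem t.2.1 3 = n ∧ elem t.2.2 3 = n := by
  obtain ⟨hI, hJ, hK⟩ := elem_bounds_of_mem_Utilde ht.1
  have h133 := two_mul_add_one_le_of_mem_Ttilde_three ht (a := 1) (b := 3) (c := 3)
    (by norm_num) le_rfl le_rfl rfl
  have h313 := two_mul_add_one_le_of_mem_Ttilde_three ht (a := 3) (b := 1) (c := 3)
    le_rfl (by norm_num) le_rfl rfl
  have h331 := two_mul_add_one_le_of_mem_Ttilde_three ht (a := 3) (b := 3) (c := 1)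
    le_rfl le_rfl (by norm_num) rfl
  have r300 := le_add_of_not_TTReducible hirr (u := 3) (v := 0) (w := 0) rfl
  have r030 := le_add_of_not_TTReducible hirr (u := 0) (v := 3) (w := 0) rfl
  have r003 := le_add_of_not_TTReducible hirr (u := 0) (v := 0) (w := 3) rfl
  norm_num at r300 r030 r003
  omega

theorem le_elem_add_elem_of_not_TTReducible (ht : t ∈ Ttilde n 3)
    (hirr : ¬TTReducible n 3 t) :
    n ≤ elem t.1 2 + elem t.2.1 1 ∧ n ≤ elem t.1 2 + elem t.2.2 1 ∧
    n ≤ elem t.1 1 + elem t.2.1 2 ∧ n ≤ elem t.2.1 2 + elem t.2.2 1 ∧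
    n ≤ elem t.1 1 + elem t.2.2 2 ∧ n ≤ elem t.2.1 1 + elem t.2.2 2 := by
  obtain ⟨hI, hJ, hK⟩ := elem_bounds_of_mem_Utilde ht.1
  have h3 := elem_three_eq_of_not_TTReducible ht hirr
  have h223 := two_mul_add_one_le_of_mem_Ttilde_three ht (a := 2) (b := 2) (c := 3)
    (by norm_num) (by norm_num) le_rfl rfl
  have h232 := two_mul_add_one_le_of_mem_Ttilde_three ht (a := 2) (b := 3) (c := 2)
    (by norm_num) le_rfl (by norm_num) rfl
  have h322 := two_mul_add_one_le_of_mem_Ttilde_three ht (a := 3) (b := 2) (c := 2)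
    le_rfl (by norm_num) (by norm_num) rfl
  have h211 := four_mul_add_one_le_of_mem_Ttilde_three ht (a := 2) (b := 1) (c := 1)
    two_pos one_pos one_pos rfl
  have h121 := four_mul_add_one_le_of_mem_Ttilde_three ht (a := 1) (b := 2) (c := 1)
    one_pos two_pos one_pos rfl
  have h112 := four_mul_add_one_le_of_mem_Ttilde_three ht (a := 1) (b := 1) (c := 2)
    one_pos one_pos two_pos rfl
  have r210 := le_add_of_not_TTReducible hirr (u := 2) (v := 1) (w := 0) rfl
  have r201 := le_add_of_not_TTReducible hirr (u := 2) (v := 0) (w := 1) rfl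
  have r120 := le_add_of_not_TTReducible hirr (u := 1) (v := 2) (w := 0) rfl
  have r021 := le_add_of_not_TTReducible hirr (u := 0) (v := 2) (w := 1) rfl
  have r102 := le_add_of_not_TTReducible hirr (u := 1) (v := 0) (w := 2) rfl
  have r012 := le_add_of_not_TTReducible hirr (u := 0) (v := 1) (w := 2) rfl
  norm_num at r210 r201 r120 r021 r102 r012
  refine ⟨?_, ?_, ?_, ?_, ?_, ?_⟩ <;> by_contra! hlt
  · exact hlt.not_ge (r210 (by omega) (by omega) (by omega))
  · exact hlt.not_ge (r201 (by omega) (by omega) (by omega))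
  · exact hlt.not_ge (r120 (by omega) (by omega) (by omega))
  · exact hlt.not_ge (r021 (by omega) (by omega) (by omega))
  · exact hlt.not_ge (r102 (by omega) (by omega) (by omega))
  · exact hlt.not_ge (r012 (by omega) (by omega) (by omega))

theorem exists_elem_eq_of_not_TTReducible (ht : t ∈ Ttilde n 3) (hirr : ¬TTReducible n 3 t) :
    ∃ m ℓ, 1 ≤ ℓ ∧ ℓ ≤ m ∧ 2 * m + ℓ = n ∧
      (elem t.1 1 = m ∧ elem t.1 2 = m + ℓ ∧ elem t.1 3 = n) ∧
      (elem t.2.1 1 = m ∧ elem t.2.1 2 = m + ℓ ∧ elem t.2.1 3 = n) ∧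
      (elem t.2.2 1 = m ∧ elem t.2.2 2 = m + ℓ ∧ elem t.2.2 3 = n) := by
  obtain ⟨hI, hJ, hK⟩ := elem_bounds_of_mem_Utilde ht.1
  have hsum := sum_elem_of_mem_Utilde ht.1
  have h3 := elem_three_eq_of_not_TTReducible ht hirr
  have h21 := le_elem_add_elem_of_not_TTReducible ht hirr
  have r111 := le_add_of_not_TTReducible hirr (u := 1) (v := 1) (w := 1) rfl
  norm_num at r111
  refine ⟨elem t.1 1, elem t.1 2 - elem t.1 1, ?_⟩
  omega

end Irreducible

theorem not_TTReducible_triple {n m ℓ : ℕ} (hℓ : 1 ≤ ℓ) (hℓm : ℓ ≤ m) (hn : 2 * m + ℓ = n) :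
    ¬TTReducible n 3 ({m, m + ℓ, n}, {m, m + ℓ, n}, {m, m + ℓ, n}) := by
  rintro ⟨u, v, w, hu, hv, hw, huvw, -, -, -, hsum⟩
  obtain ⟨h1, h2, h3⟩ := elem_triple (a := m) (b := m + ℓ) (c := n) (by omega) (by omega)
  interval_cases u <;> interval_cases v <;> interval_cases w <;>
    simp only [elem_zero, h1, h2, h3] at hsum <;> omega

end Paper

theorem irreducible_r3_characterization_general (n : ℕ)
    (t : Finset ℕ × Finset ℕ × Finset ℕ) (ht : t ∈ Paper.Ttilde n 3) :
    ¬ Paper.TTReducible n 3 t ↔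
      ∃ m ℓ : ℕ, 1 ≤ ℓ ∧ ℓ ≤ m ∧ 2 * m + ℓ = n ∧
        t.1 = ({m, m + ℓ, n} : Finset ℕ) ∧
        t.2.1 = ({m, m + ℓ, n} : Finset ℕ) ∧
        t.2.2 = ({m, m + ℓ, n} : Finset ℕ) := by
  constructor
  · intro hirr
    obtain ⟨m, ℓ, hℓ, hℓm, hn, ⟨hI1, hI2, hI3⟩, ⟨hJ1, hJ2, hJ3⟩, ⟨hK1, hK2, hK3⟩⟩ :=
      Paper.exists_elem_eq_of_not_TTReducible ht hirr
    exact ⟨m, ℓ, hℓ, hℓm, hn, Paper.eq_triple_of_elem_eq ht.1.2.2.2.1 hI1 hI2 hI3,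
      Paper.eq_triple_of_elem_eq ht.1.2.2.2.2.1 hJ1 hJ2 hJ3,
      Paper.eq_triple_of_elem_eq ht.1.2.2.2.2.2.1 hK1 hK2 hK3⟩
  · obtain ⟨I, J, K⟩ := t
    rintro ⟨m, ℓ, hℓ, hℓm, hn, rfl, rfl, rfl⟩
    exact Paper.not_TTReducible_triple hℓ hℓm hn

/-- For `r = 3`: a triple `(I,J,K) ∈ T̃ⁿ₃` is TT-irreducible if and only if
`I = J = K = {m, m+ℓ, n}` for some integers `ℓ, m` with `1 ≤ ℓ ≤ m` and `2m + ℓ = n`. -/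
theorem irreducible_r3_characterization (n : ℕ) (hn : 3 ≤ n)
    (t : Finset ℕ × Finset ℕ × Finset ℕ) (ht : t ∈ Paper.Ttilde n 3) :
    ¬ Paper.TTReducible n 3 t ↔
      ∃ m ℓ : ℕ, 1 ≤ ℓ ∧ ℓ ≤ m ∧ 2 * m + ℓ = n ∧
        t.1 = ({m, m + ℓ, n} : Finset ℕ) ∧
        t.2.1 = ({m, m + ℓ, n} : Finset ℕ) ∧
        t.2.2 = ({m, m + ℓ, n} : Finset ℕ) :=
  irreducible_r3_characterization_general n t ht
end

section
/- Let n = 2m+ℓ with 1 ≤ ℓ ≤ m, and let λ = μ = (m+ℓ−2, m−1, 0), ν = (2m+ℓ−3, m+ℓ−2, m−1). Then the Littlewood–Richardson coefficient c^ν_{λ,μ} equals ℓ; equivalently, the number of Littlewood–Richardson fillings of ν\λ according to μ is exactly ℓ. -/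
section Aux

/-- The explicit filling parameterized by `x = f 1 2`. -/
def Ffill (m ℓ x : ℕ) : ℕ → ℕ → ℕ := fun k l =>
  if k = 1 ∧ l = 1 then m - 1
  else if k = 1 ∧ l = 2 then x
  else if k = 2 ∧ l = 2 then ℓ - 1 - x
  else if k = 1 ∧ l = 3 then ℓ - 1 - x
  else if k = 2 ∧ l = 3 then m - ℓ + x
  else 0

private lemma sum3 (f : ℕ → ℕ) : ∑ k ∈ Finset.Icc 1 3, f k = f 1 + f 2 + f 3 := by
  show ∑ k ∈ ({1,2,3} : Finset ℕ), f k = _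
  rw [Finset.sum_insert (by decide), Finset.sum_insert (by decide), Finset.sum_singleton,
    add_assoc]

private lemma sum2 (f : ℕ → ℕ) : ∑ k ∈ Finset.Icc 1 2, f k = f 1 + f 2 := by
  show ∑ k ∈ ({1,2} : Finset ℕ), f k = _
  rw [Finset.sum_insert (by decide), Finset.sum_singleton]

private lemma sum1 (f : ℕ → ℕ) : ∑ k ∈ Finset.Icc 1 1, f k = f 1 :=
  Finset.sum_singleton _ _

private lemma sum23 (f : ℕ → ℕ) : ∑ k ∈ Finset.Icc 2 3, f k = f 2 + f 3 := by
  show ∑ k ∈ ({2,3} : Finset ℕ), f k = _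
  rw [Finset.sum_insert (by decide), Finset.sum_singleton]

private lemma sum22 (f : ℕ → ℕ) : ∑ k ∈ Finset.Icc 2 2, f k = f 2 :=
  Finset.sum_singleton _ _

private lemma sum33 (f : ℕ → ℕ) : ∑ k ∈ Finset.Icc 3 3, f k = f 3 :=
  Finset.sum_singleton _ _

private lemma sum0 (f : ℕ → ℕ) : ∑ k ∈ Finset.Icc 1 0, f k = 0 := by
  simp

private lemma Ffill_isFilling (m ℓ : ℕ) (hℓ1 : 1 ≤ ℓ) (hℓm : ℓ ≤ m) (x : ℕ) (hx : x < ℓ) :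
    Paper.IsFilling 3
      (fun p => if p = 1 then m + ℓ - 2 else if p = 2 then m - 1 else 0)
      (fun p => if p = 1 then m + ℓ - 2 else if p = 2 then m - 1 else 0)
      (fun p => if p = 1 then 2 * m + ℓ - 3 else if p = 2 then m + ℓ - 2
                else if p = 3 then m - 1 else 0) (Ffill m ℓ x) := by
  refine ⟨?_, ?_, ?_, ?_, ?_⟩
  · intro k l h
    simp only [Ffill]
    split_ifs <;> omega
  · intro l h1 h3
    interval_cases l <;>
      rw [show (1:ℕ) = 1 by rfl] <;>
      first
        | (rw [sum1]; simp only [Ffill]; norm_num; try omega)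
        | (rw [sum2]; simp only [Ffill]; norm_num; try omega)
        | (rw [sum3]; simp only [Ffill]; norm_num; try omega)
  · intro k h1 h3
    interval_cases k <;>
      first
        | (rw [sum3]; simp only [Ffill]; norm_num; try omega)
        | (rw [sum23]; simp only [Ffill]; norm_num; try omega)
        | (rw [sum33]; simp only [Ffill]; norm_num; try omega)
  · intro p l hp hl
    have hl12 : (p = 0 ∧ l = 1) ∨ (p = 0 ∧ l = 2) ∨ (p = 1 ∧ l = 2) := by omega
    rcases hl12 with ⟨rfl, rfl⟩ | ⟨rfl, rfl⟩ | ⟨rfl, rfl⟩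
    · rw [sum0, sum1]; simp only [Ffill]; norm_num; try omega
    · rw [sum0, sum1]; simp only [Ffill]; norm_num; try omega
    · rw [sum1, sum2]; simp only [Ffill]; norm_num; try omega
  · intro k p h1 h2 h3
    have : (k = 1 ∧ p = 1) ∨ (k = 1 ∧ p = 2) ∨ (k = 2 ∧ p = 2) := by omega
    rcases this with ⟨rfl, rfl⟩ | ⟨rfl, rfl⟩ | ⟨rfl, rfl⟩
    · rw [sum1, sum22]; simp only [Ffill]; norm_num; try omega
    · rw [sum2, sum23]; simp only [Ffill]; norm_num; try omega
    · rw [sum22, sum33]; simp only [Ffill]; norm_num; try omega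

private lemma filling_eq_Ffill (m ℓ : ℕ) (hℓ1 : 1 ≤ ℓ) (hℓm : ℓ ≤ m) (f : ℕ → ℕ → ℕ)
    (hf : Paper.IsFilling 3
      (fun p => if p = 1 then m + ℓ - 2 else if p = 2 then m - 1 else 0)
      (fun p => if p = 1 then m + ℓ - 2 else if p = 2 then m - 1 else 0)
      (fun p => if p = 1 then 2 * m + ℓ - 3 else if p = 2 then m + ℓ - 2
                else if p = 3 then m - 1 else 0) f) :
    f = Ffill m ℓ (f 1 2) ∧ f 1 2 < ℓ := by
  obtain ⟨h0, hrow, hcol, _, _⟩ := hf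
  have e1 := hrow 1 (by norm_num) (by norm_num)
  have e2 := hrow 2 (by norm_num) (by norm_num)
  have e3 := hrow 3 (by norm_num) (by norm_num)
  have c1 := hcol 1 (by norm_num) (by norm_num)
  have c2 := hcol 2 (by norm_num) (by norm_num)
  have c3 := hcol 3 (by norm_num) (by norm_num)
  rw [sum1] at e1
  rw [sum2] at e2
  rw [sum3] at e3 c1
  rw [sum23] at c2
  rw [sum33] at c3
  norm_num at e1 e2 e3 c1 c2 c3
  constructor
  · funext k l
    by_cases hz : k < 1 ∨ l < k ∨ 3 < l
    · rw [h0 k l hz]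
      simp only [Ffill]
      split_ifs <;> omega
    · push_neg at hz
      obtain ⟨hk1, hkl, hl3⟩ := hz
      have hk3 : k ≤ 3 := le_trans hkl hl3
      simp only [Ffill]
      interval_cases k <;> interval_cases l <;> split_ifs <;> omega
  · omega

private noncomputable def fillingEquiv (m ℓ : ℕ) (hℓ1 : 1 ≤ ℓ) (hℓm : ℓ ≤ m) :
    {f : ℕ → ℕ → ℕ // Paper.IsFilling 3
      (fun p => if p = 1 then m + ℓ - 2 else if p = 2 then m - 1 else 0)
      (fun p => if p = 1 then m + ℓ - 2 else if p = 2 then m - 1 else 0)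
      (fun p => if p = 1 then 2 * m + ℓ - 3 else if p = 2 then m + ℓ - 2
                else if p = 3 then m - 1 else 0) f} ≃ Fin ℓ where
  toFun f := ⟨f.1 1 2, (filling_eq_Ffill m ℓ hℓ1 hℓm f.1 f.2).2⟩
  invFun x := ⟨Ffill m ℓ x.1, Ffill_isFilling m ℓ hℓ1 hℓm x.1 x.2⟩
  left_inv f := Subtype.ext ((filling_eq_Ffill m ℓ hℓ1 hℓm f.1 f.2).1).symm
  right_inv x := by
    apply Fin.ext
    simp [Ffill]

end Aux

/-- Let `n = 2m + ℓ` with `1 ≤ ℓ ≤ m`, and let `λ = μ = (m+ℓ−2, m−1, 0)`,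
`ν = (2m+ℓ−3, m+ℓ−2, m−1)`.  Then the Littlewood–Richardson coefficient `c^ν_{λ,μ}`
equals `ℓ`: the number of Littlewood–Richardson fillings of `ν\λ` according to `μ`
is exactly `ℓ`. -/
theorem LRcoeff_irreducible_r3 (m ℓ n : ℕ) (hℓ1 : 1 ≤ ℓ) (hℓm : ℓ ≤ m)
    (hn : n = 2 * m + ℓ) :
    Paper.LRcoeff 3
      (fun p => if p = 1 then m + ℓ - 2 else if p = 2 then m - 1 else 0)
      (fun p => if p = 1 then m + ℓ - 2 else if p = 2 then m - 1 else 0)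
      (fun p => if p = 1 then 2 * m + ℓ - 3 else if p = 2 then m + ℓ - 2
                else if p = 3 then m - 1 else 0) = ℓ := by
  rw [Paper.LRcoeff, Nat.card_eq_of_equiv_fin (fillingEquiv m ℓ hℓ1 hℓm)]
end
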